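/- Let M ≥ m > 0 and A a bounded linear operator on a complex Hilbert space such that Re⟨Mx − Ax, Ax − mx⟩ ≥ 0 for all unit vectors x. Then ‖A‖ − w(A) ≤ (M − m)²/(4(M + m)). -/

import Mathlib

noncomputable def numRadius {H : Type*} [NormedAddCommGroup H] [InnerProductSpace ℂ H]
    (T : H →L[ℂ] H) : ℝ :=
  sSup {r : ℝ | ∃ x : H, ‖x‖ = 1 ∧ r = ‖(inner ℂ (T x) x : ℂ)‖}

/-!
For a unit vector `x` and `y = A x`, expanding the hypothesis gives
`‖y‖² + M m ≤ (M + m) Re ⟪y, x⟫ ≤ (M + m) |⟪y, x⟫|`. Completing the square in `‖y‖` turns this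
into `‖y‖ - |⟪y, x⟫| ≤ (M - m)² / (4 (M + m))`; taking suprema over unit vectors gives the theorem.
-/

open RCLike

section InnerProduct

variable {𝕜 E : Type*} [RCLike 𝕜] [NormedAddCommGroup E] [InnerProductSpace 𝕜 E]

theorem re_inner_smul_sub_sub_smul_of_norm_eq_one (m M : ℝ) {x : E} (hx : ‖x‖ = 1) (y : E) :
    re (inner 𝕜 ((M : 𝕜) • x - y) (y - (m : 𝕜) • x))
      = (M + m) * re (inner 𝕜 y x) - ‖y‖ ^ 2 - M * m := by
  have hxx : re (inner 𝕜 x x) = 1 := by rw [inner_self_eq_norm_sq, hx, one_pow]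
  have hxy : re (inner 𝕜 x y) = re (inner 𝕜 y x) := inner_re_symm x y
  simp only [inner_sub_left, inner_sub_right, inner_smul_left, inner_smul_right, map_sub,
    conj_ofReal, re_ofReal_mul, inner_self_eq_norm_sq, hxx, hxy]
  ring

theorem sub_le_of_sq_add_mul_le {m M t r : ℝ} (hMm : 0 < M + m)
    (h : t ^ 2 + M * m ≤ (M + m) * r) :
    t - r ≤ (M - m) ^ 2 / (4 * (M + m)) := by
  rw [le_div_iff₀ (by positivity)]
  nlinarith [sq_nonneg (2 * t - (M + m))]

theorem norm_le_norm_inner_add_of_re_inner_nonneg {m M : ℝ} (hMm : 0 < M + m) {x : E}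
    (hx : ‖x‖ = 1) {y : E} (h : 0 ≤ re (inner 𝕜 ((M : 𝕜) • x - y) (y - (m : 𝕜) • x))) :
    ‖y‖ ≤ ‖(inner 𝕜 y x : 𝕜)‖ + (M - m) ^ 2 / (4 * (M + m)) := by
  rw [re_inner_smul_sub_sub_smul_of_norm_eq_one m M hx] at h
  have := sub_le_of_sq_add_mul_le (t := ‖y‖) (r := ‖(inner 𝕜 y x : 𝕜)‖) hMm
    (by nlinarith [re_le_norm (inner 𝕜 y x : 𝕜)])
  linarith

end InnerProduct

section NumRadius

variable {H : Type*} [NormedAddCommGroup H] [InnerProductSpace ℂ H]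

theorem bddAbove_numRadius_set (T : H →L[ℂ] H) :
    BddAbove {r : ℝ | ∃ x : H, ‖x‖ = 1 ∧ r = ‖(inner ℂ (T x) x : ℂ)‖} := by
  refine ⟨‖T‖, ?_⟩
  rintro r ⟨x, hx, rfl⟩
  calc ‖(inner ℂ (T x) x : ℂ)‖ ≤ ‖T x‖ * ‖x‖ := norm_inner_le_norm _ _
    _ ≤ ‖T‖ * ‖x‖ * ‖x‖ := by gcongr; exact T.le_opNorm x
    _ = ‖T‖ := by rw [hx, mul_one, mul_one]

theorem norm_inner_le_numRadius (T : H →L[ℂ] H) {x : H} (hx : ‖x‖ = 1) :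
    ‖(inner ℂ (T x) x : ℂ)‖ ≤ numRadius T :=
  le_csSup (bddAbove_numRadius_set T) ⟨x, hx, rfl⟩

theorem numRadius_nonneg (T : H →L[ℂ] H) : 0 ≤ numRadius T :=
  Real.sSup_nonneg fun _ ⟨_, _, hr⟩ => hr ▸ norm_nonneg _

end NumRadius

theorem stmt_17_general {H : Type*} [NormedAddCommGroup H] [InnerProductSpace ℂ H]
    (A : H →L[ℂ] H) (m M : ℝ) (hm : 0 < m) (hmM : m ≤ M)
    (h : ∀ x : H, ‖x‖ = 1 →
      0 ≤ (inner ℂ ((M : ℂ) • x - A x) (A x - (m : ℂ) • x) : ℂ).re) :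
    ‖A‖ - numRadius A ≤ (M - m) ^ 2 / (4 * (M + m)) := by
  have hMm : 0 < M + m := by linarith
  suffices ‖A‖ ≤ numRadius A + (M - m) ^ 2 / (4 * (M + m)) by linarith
  refine A.opNorm_le_of_unit_norm (by positivity [numRadius_nonneg A]) fun x hx => ?_
  have := norm_le_norm_inner_add_of_re_inner_nonneg (𝕜 := ℂ) (y := A x) hMm hx (h x hx)
  linarith [norm_inner_le_numRadius A hx]

theorem stmt_17 {H : Type*} [NormedAddCommGroup H] [InnerProductSpace ℂ H] [CompleteSpace H]
    (A : H →L[ℂ] H) (m M : ℝ) (hm : 0 < m) (hmM : m ≤ M)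
    (h : ∀ x : H, ‖x‖ = 1 →
      0 ≤ (inner ℂ ((M : ℂ) • x - A x) (A x - (m : ℂ) • x) : ℂ).re) :
    ‖A‖ - numRadius A ≤ (M - m) ^ 2 / (4 * (M + m)) :=
  stmt_17_general A m M hm hmM h
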